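/- The map Φ is a bijection from the set of weight sequences of shape (n−k,k) onto the set of torus-fixed complete N-invariant flags in V; in particular, the Springer fiber Y contains exactly binomial(n,k) torus-fixed flags. -/

import Mathlib

open Module

namespace Springer

/-- The nilpotent endomorphism `N` of `ℂ^n` with two Jordan blocks of sizes `n-k` and `k`:
the basis vectors `e 0, …, e (n-k-1)` are `p 1, …, p (n-k)` and
`e (n-k), …, e (n-1)` are `q 1, …, q k`; `N` shifts each block down by one. -/
def Nmap (n k : ℕ) : (Fin n → ℂ) →ₗ[ℂ] (Fin n → ℂ) where
  toFun x j := if h : j.val + 1 < n ∧ j.val + 1 ≠ n - k then x ⟨j.val + 1, h.1⟩ else 0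
  map_add' x y := by
    funext j
    by_cases h : j.val + 1 < n ∧ j.val + 1 ≠ n - k <;> simp [h]
  map_smul' c x := by
    funext j
    by_cases h : j.val + 1 < n ∧ j.val + 1 ≠ n - k <;> simp [h]

/-- `span (p 1, …, p t, q 1, …, q b)` inside `ℂ^n`. -/
noncomputable def spanPQ (n k t b : ℕ) : Submodule ℂ (Fin n → ℂ) :=
  Submodule.span ℂ {x | ∃ j : Fin n,
    ((j.val < t ∧ j.val < n - k) ∨ (n - k ≤ j.val ∧ j.val < n - k + b)) ∧ x = Pi.single j 1}

/-- `P = span (p 1, …, p (n-k))`. -/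
noncomputable def Pmod (n k : ℕ) : Submodule ℂ (Fin n → ℂ) := spanPQ n k (n - k) 0

/-- `Q = span (q 1, …, q k)`. -/
noncomputable def Qmod (n k : ℕ) : Submodule ℂ (Fin n → ℂ) := spanPQ n k 0 k

/-- The projection of `V` onto `Q` along `P`. -/
def projQ (n k : ℕ) : (Fin n → ℂ) →ₗ[ℂ] (Fin n → ℂ) where
  toFun x j := if n - k ≤ j.val then x j else 0
  map_add' x y := by
    funext j
    by_cases h : n - k ≤ j.val
    · simp only [Pi.add_apply, if_pos h]
    · simp only [Pi.add_apply, if_neg h, add_zero]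
  map_smul' c x := by
    funext j
    by_cases h : n - k ≤ j.val
    · simp only [Pi.smul_apply, smul_eq_mul, if_pos h, RingHom.id_apply]
    · simp only [Pi.smul_apply, smul_eq_mul, if_neg h, mul_zero, RingHom.id_apply]

/-- A complete `N`-invariant flag in `ℂ^n`: a chain `F 0 ⊆ ⋯ ⊆ F n` with `dim F i = i`
(thus `F 0 = 0` and `F n = V`) and `N (F (i+1)) ⊆ F i`. -/
def IsNFlag (n k : ℕ) (F : Fin (n + 1) → Submodule ℂ (Fin n → ℂ)) : Prop :=
  Monotone F ∧ (∀ i : Fin (n + 1), finrank ℂ (F i) = i.val) ∧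
    ∀ i : Fin n, Submodule.map (Nmap n k) (F i.succ) ≤ F i.castSucc

/-- A flag is torus fixed if each subspace is spanned by its intersections with `P` and `Q`. -/
def TorusFixed (n k : ℕ) (F : Fin (n + 1) → Submodule ℂ (Fin n → ℂ)) : Prop :=
  ∀ i, F i = (F i ⊓ Pmod n k) ⊔ (F i ⊓ Qmod n k)

/-- A weight sequence (row-strict tableau) of shape `(n-k, k)`:
`true` encodes `∨` and `false` encodes `∧`; there are exactly `k` symbols `∨`. -/
def IsWeightSeq (n k : ℕ) (w : Fin n → Bool) : Prop :=
  (Finset.univ.filter fun i => w i = true).card = k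

/-- `t i` = number of 1-based positions `≤ i` labelled `∧`. -/
def tcount (n : ℕ) (w : Fin n → Bool) (i : ℕ) : ℕ :=
  (Finset.univ.filter fun j : Fin n => j.val < i ∧ w j = false).card

/-- `b i` = number of 1-based positions `≤ i` labelled `∨`. -/
def bcount (n : ℕ) (w : Fin n → Bool) (i : ℕ) : ℕ :=
  (Finset.univ.filter fun j : Fin n => j.val < i ∧ w j = true).card

/-- The torus fixed flag `Φ(w)` attached to a weight sequence `w`:
`Φ(w) i = span (p 1, …, p (t i), q 1, …, q (b i))`. -/
noncomputable def PhiFlag (n k : ℕ) (w : Fin n → Bool) : Fin (n + 1) → Submodule ℂ (Fin n → ℂ) :=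
  fun i => spanPQ n k (tcount n w i.val) (bcount n w i.val)

/-- A crossingless matching on the points `1, …, n`: a set of cups `(i, j)` with
`1 ≤ i < j ≤ n`, pairwise disjoint, mutually non-crossing, and such that no unmatched
point (ray) lies strictly inside any cup. -/
structure CrossinglessMatching (n : ℕ) where
  cups : Finset (ℕ × ℕ)
  mem_range : ∀ p ∈ cups, 1 ≤ p.1 ∧ p.1 < p.2 ∧ p.2 ≤ n
  disjoint' : ∀ p ∈ cups, ∀ q ∈ cups, p ≠ q →
    p.1 ≠ q.1 ∧ p.1 ≠ q.2 ∧ p.2 ≠ q.1 ∧ p.2 ≠ q.2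
  noncross : ∀ p ∈ cups, ∀ q ∈ cups, ¬(p.1 < q.1 ∧ q.1 < p.2 ∧ p.2 < q.2)
  rays_outside : ∀ p ∈ cups, ∀ m : ℕ, p.1 < m → m < p.2 → ∃ q ∈ cups, m = q.1 ∨ m = q.2

/-- The point `m ∈ {1, …, n}` is matched (lies on a cup) in `C`. -/
def Matched (n : ℕ) (C : CrossinglessMatching n) (m : ℕ) : Prop :=
  ∃ p ∈ C.cups, m = p.1 ∨ m = p.2

/-- A standard tableau of shape `(n-k, k)`: a filling of the two-row Young diagram by
the numbers `1, …, n`, each used exactly once, with rows and columns strictly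
decreasing read from the top left. -/
structure StandardTableau (n k : ℕ) where
  top : Fin (n - k) → ℕ
  bot : Fin k → ℕ
  top_strict : ∀ i j : Fin (n - k), i < j → top j < top i
  bot_strict : ∀ i j : Fin k, i < j → bot j < bot i
  col_strict : ∀ (i : Fin (n - k)) (j : Fin k), i.val = j.val → bot j < top i
  mem_iff : ∀ m : ℕ, (1 ≤ m ∧ m ≤ n) ↔ ((∃ i, top i = m) ∨ (∃ j, bot j = m))
  top_ne_bot : ∀ (i : Fin (n - k)) (j : Fin k), top i ≠ bot j

/-- `C` is the crossingless matching `m(S)` associated with the standard tableau `S`: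
it has `k` cups and its left cup endpoints are exactly the bottom-row entries of `S`. -/
def IsMatchOf (n k : ℕ) (S : StandardTableau n k) (C : CrossinglessMatching n) : Prop :=
  C.cups.card = k ∧ ∀ m : ℕ, (∃ p ∈ C.cups, p.1 = m) ↔ ∃ j, S.bot j = m

/-- The weight sequence of a standard tableau: `∨` (i.e. `true`) exactly on the
bottom-row entries. -/
def tabWeight (n k : ℕ) (S : StandardTableau n k) : Fin n → Bool :=
  fun j => decide (∃ i, S.bot i = j.val + 1)

/-- The cup conditions cutting out `Y_S`: for every cup `(i, σ i)` of the matching,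
`N ^ δ i (F (σ i)) = F (i - 1)` where `δ i = (σ i - i + 1)/2`. -/
def CupCond (n k : ℕ) (C : CrossinglessMatching n)
    (F : Fin (n + 1) → Submodule ℂ (Fin n → ℂ)) : Prop :=
  ∀ p ∈ C.cups, ∀ (h1 : p.1 - 1 < n + 1) (h2 : p.2 < n + 1),
    Submodule.map ((Nmap n k) ^ ((p.2 - p.1 + 1) / 2)) (F ⟨p.2, h2⟩) = F ⟨p.1 - 1, h1⟩

/-- The ray conditions cutting out `Y_S` (for the weight sequence of `S`): for every
ray `m` of the matching, `F m = (N ^ b m)⁻¹ (range (N ^ (n - k - t m + b m)))`. -/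
def RayCond (n k : ℕ) (w : Fin n → Bool) (C : CrossinglessMatching n)
    (F : Fin (n + 1) → Submodule ℂ (Fin n → ℂ)) : Prop :=
  ∀ m : ℕ, 1 ≤ m → ∀ hm : m < n + 1, ¬ Matched n C m →
    F ⟨m, hm⟩ = Submodule.comap ((Nmap n k) ^ (bcount n w m))
      (LinearMap.range ((Nmap n k) ^ (n - k - tcount n w m + bcount n w m)))

/-- Membership in the (Spaltenstein–Vargas–Fung) component `Y_S`, where `C = m(S)`. -/
def InYS (n k : ℕ) (S : StandardTableau n k) (C : CrossinglessMatching n)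
    (F : Fin (n + 1) → Submodule ℂ (Fin n → ℂ)) : Prop :=
  IsNFlag n k F ∧ CupCond n k C F ∧ RayCond n k (tabWeight n k S) C F

/-- The weight sequence `v` orients the crossingless matching `C`: opposite labels at
the two endpoints of every cup, and `∧` at every ray. -/
def OrientsMatching (n : ℕ) (v : Fin n → Bool) (C : CrossinglessMatching n) : Prop :=
  (∀ p ∈ C.cups, ∀ (h1 : p.1 - 1 < n) (h2 : p.2 - 1 < n),
      v ⟨p.1 - 1, h1⟩ ≠ v ⟨p.2 - 1, h2⟩) ∧
  (∀ m : ℕ, 1 ≤ m → m ≤ n → ¬ Matched n C m → ∀ h : m - 1 < n, v ⟨m - 1, h⟩ = false)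

/-- `C` is the matching `m(w)` produced from the weight sequence `w` by repeatedly
joining a pair `i < j` with `w i = ∨`, `w j = ∧` and all points strictly between them
already matched, until no such pair remains. -/
def IsMw (n : ℕ) (w : Fin n → Bool) (C : CrossinglessMatching n) : Prop :=
  (∀ p ∈ C.cups, ∀ (h1 : p.1 - 1 < n) (h2 : p.2 - 1 < n),
      w ⟨p.1 - 1, h1⟩ = true ∧ w ⟨p.2 - 1, h2⟩ = false) ∧
  ¬ ∃ i j : ℕ, 1 ≤ i ∧ i < j ∧ j ≤ n ∧ ¬ Matched n C i ∧ ¬ Matched n C j ∧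
      (∀ h : i - 1 < n, w ⟨i - 1, h⟩ = true) ∧ (∀ h : j - 1 < n, w ⟨j - 1, h⟩ = false) ∧
      (∀ m : ℕ, i < m → m < j → Matched n C m)

/-- `Cw` is the completed matching `C(w)`: a crossingless matching with `k` cups
containing `m(w) = Cm` on whose every cup `w` puts opposite labels. -/
def IsCw (n k : ℕ) (w : Fin n → Bool) (Cm Cw : CrossinglessMatching n) : Prop :=
  Cm.cups ⊆ Cw.cups ∧ Cw.cups.card = k ∧
  ∀ p ∈ Cw.cups, ∀ (h1 : p.1 - 1 < n) (h2 : p.2 - 1 < n),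
    w ⟨p.1 - 1, h1⟩ ≠ w ⟨p.2 - 1, h2⟩

/-- Membership in the closed attracting set `St(w)`, where `S = S(w)` and `Cw = C(w)`:
a flag of `Y_{S(w)}` such that `F i = Φ(w) i` for every `i` with `w i = ∧` which is a
left cup endpoint of `C(w)`. -/
def InSt (n k : ℕ) (w : Fin n → Bool) (S : StandardTableau n k)
    (Cw : CrossinglessMatching n) (F : Fin (n + 1) → Submodule ℂ (Fin n → ℂ)) : Prop :=
  InYS n k S Cw F ∧
  ∀ i : ℕ, ∀ hi : i < n + 1, (∀ h : i - 1 < n, w ⟨i - 1, h⟩ = false) →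
    (∃ p ∈ Cw.cups, p.1 = i) → F ⟨i, hi⟩ = PhiFlag n k w ⟨i, hi⟩

/-- The generating relation of `∼_C`: `a ∼ σ(a+1)` whenever `a+1` is a left cup
endpoint of `C`. -/
def cupRel (n : ℕ) (C : CrossinglessMatching n) (a b : ℕ) : Prop :=
  ∃ p ∈ C.cups, p.1 = a + 1 ∧ p.2 = b

/-- The equivalence relation `∼_C` on `{0, 1, …, n}`. -/
def simRel (n : ℕ) (C : CrossinglessMatching n) : ℕ → ℕ → Prop :=
  Relation.EqvGen (cupRel n C)

/-- The equivalence relation `≈_{C,D}` on `{0, 1, …, n}` generated by `∼_C` and `∼_D`. -/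
def approxRel (n : ℕ) (C D : CrossinglessMatching n) : ℕ → ℕ → Prop :=
  Relation.EqvGen (fun a b => cupRel n C a b ∨ cupRel n D a b)

/-- Adjacency in the glued diagram `D̄C`: `i` and `j` are joined by a cup of `C` or of `D`. -/
def Adj (n : ℕ) (C D : CrossinglessMatching n) (i j : ℕ) : Prop :=
  (i, j) ∈ C.cups ∨ (j, i) ∈ C.cups ∨ (i, j) ∈ D.cups ∨ (j, i) ∈ D.cups

/-- Lying in the same connected component of the glued diagram `D̄C`. -/
def Conn (n : ℕ) (C D : CrossinglessMatching n) : ℕ → ℕ → Prop :=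
  Relation.EqvGen (Adj n C D)

/-- The component of `v` in the glued diagram is a circle: every vertex of the
component is matched both in `C` and in `D`. -/
def IsCircleComp (n : ℕ) (C D : CrossinglessMatching n) (v : ℕ) : Prop :=
  ∀ u, Conn n C D u v → Matched n C u ∧ Matched n D u

/-- `v` is the leftmost vertex of its connected component (circle or line) of the
glued diagram. -/
def IsLeftmost (n : ℕ) (C D : CrossinglessMatching n) (v : ℕ) : Prop :=
  1 ≤ v ∧ v ≤ n ∧ ∀ u, 1 ≤ u → Conn n C D u v → v ≤ u

/-- An orientation of the glued diagram `D̄C` (with `C = m(w)` and `D = m(w')`):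
a weight sequence assigning opposite labels to the endpoints of every cup of `C` and
of `D`, agreeing with `w` at every ray of `C` and with `w'` at every ray of `D`. -/
def OrientsGlued (n k : ℕ) (w w' : Fin n → Bool) (C D : CrossinglessMatching n)
    (v : Fin n → Bool) : Prop :=
  IsWeightSeq n k v ∧
  (∀ p ∈ C.cups, ∀ (h1 : p.1 - 1 < n) (h2 : p.2 - 1 < n),
      v ⟨p.1 - 1, h1⟩ ≠ v ⟨p.2 - 1, h2⟩) ∧
  (∀ p ∈ D.cups, ∀ (h1 : p.1 - 1 < n) (h2 : p.2 - 1 < n),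
      v ⟨p.1 - 1, h1⟩ ≠ v ⟨p.2 - 1, h2⟩) ∧
  (∀ i : Fin n, ¬ Matched n C (i.val + 1) → v i = w i) ∧
  (∀ i : Fin n, ¬ Matched n D (i.val + 1) → v i = w' i)

/-- The component of `v0` in the glued diagram is orientable: it admits a labeling of
its vertices by `∧, ∨`, opposite across every edge, agreeing with `w` at every vertex
which is a ray of `C` and with `w'` at every vertex which is a ray of `D`. -/
def ComponentOrientable (n : ℕ) (w w' : Fin n → Bool) (C D : CrossinglessMatching n)
    (v0 : ℕ) : Prop :=
  ∃ g : ℕ → Bool,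
    (∀ i j, Conn n C D i v0 → Adj n C D i j → g i ≠ g j) ∧
    (∀ i, Conn n C D i v0 → 1 ≤ i → i ≤ n → ¬ Matched n C i →
      ∀ h : i - 1 < n, g i = w ⟨i - 1, h⟩) ∧
    (∀ i, Conn n C D i v0 → 1 ≤ i → i ≤ n → ¬ Matched n D i →
      ∀ h : i - 1 < n, g i = w' ⟨i - 1, h⟩)

/-- A walk in the glued multigraph `D̄C` from `a` to `b`: a list of edges, each tagged
by `true` (an edge of `C`) or `false` (an edge of `D`), consecutively incident. -/
def IsGluedWalk (n : ℕ) (C D : CrossinglessMatching n) : ℕ → ℕ → List (Bool × ℕ × ℕ) → Prop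
  | a, b, [] => a = b
  | a, b, e :: es =>
      (if e.1 = true then (e.2.1, e.2.2) ∈ C.cups else (e.2.1, e.2.2) ∈ D.cups) ∧
      ((a = e.2.1 ∧ IsGluedWalk n C D e.2.2 b es) ∨ (a = e.2.2 ∧ IsGluedWalk n C D e.2.1 b es))

/-- The standard flag of `ℂ^n`. -/
noncomputable def stdFlag (n k : ℕ) : Fin (n + 1) → Submodule ℂ (Fin n → ℂ) :=
  fun i => spanPQ n k (min i.val (n - k)) (i.val - (n - k))

/-!
`N` preserves `P` and `Q` and acts on each of them as a single nilpotent Jordan block. An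
`N`-invariant subspace of `P` of dimension `d` is killed by `N ^ d`, so it lies in, hence equals,
`span (p 1, …, p d)`; likewise in `Q`. A torus-fixed `N`-invariant flag is therefore
`F i = span (p 1, …, p (t i), q 1, …, q (b i))` with `t i + b i = i`, and the weight sequence is
recovered as the set of positions where `b` jumps. Counting weight sequences is choosing the `k`
positions of `∨` among `n`.
-/

lemma _root_.Module.End.le_ker_pow_finrank_of_isNilpotent {K V : Type*} [Field K]
    [AddCommGroup V] [Module K V] [FiniteDimensional K V] {f : Module.End K V} (hf : IsNilpotent f)
    {W : Submodule K V} (hW : W.map f ≤ W) : W ≤ LinearMap.ker (f ^ finrank K W) := by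
  have hmaps : Set.MapsTo f W W := fun x hx => hW ⟨x, hx, rfl⟩
  have hchar := (Module.End.isNilpotent.restrict hmaps hf).charpoly_eq_X_pow_finrank
  have hpow : f.restrict hmaps ^ finrank K W = 0 := by
    simpa [hchar] using (f.restrict hmaps).aeval_self_charpoly
  rw [Module.End.pow_restrict (h := hmaps)] at hpow
  intro x hx
  simpa using congr_arg Subtype.val (LinearMap.congr_fun hpow ⟨x, hx⟩)

section SpanPQ

variable {n k t b t' b' : ℕ}

def pqSupport (n k t b : ℕ) : Finset (Fin n) :=
  {j | (j.val < t ∧ j.val < n - k) ∨ (n - k ≤ j.val ∧ j.val < n - k + b)}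

lemma spanPQ_eq_span_basisFun :
    spanPQ n k t b = Submodule.span ℂ (Pi.basisFun ℂ (Fin n) '' pqSupport n k t b) := by
  rw [spanPQ]
  congr 1
  ext x
  simp [pqSupport, eq_comm]

lemma mem_spanPQ {x : Fin n → ℂ} :
    x ∈ spanPQ n k t b ↔ ∀ j, x j ≠ 0 → j ∈ pqSupport n k t b := by
  rw [spanPQ_eq_span_basisFun, Basis.mem_span_image]
  simp [Set.subset_def]

lemma card_pqSupport (hk : k ≤ n) (ht : t ≤ n - k) (hb : b ≤ k) :
    (pqSupport n k t b).card = t + b := by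
  have : (pqSupport n k t b).map Fin.valEmbedding =
      Finset.range t ∪ Finset.Ico (n - k) (n - k + b) := by
    ext m
    simp only [pqSupport, Finset.mem_map, Finset.mem_filter, Finset.mem_univ, true_and,
      Fin.valEmbedding_apply, Finset.mem_union, Finset.mem_range, Finset.mem_Ico]
    constructor
    · rintro ⟨j, hj, rfl⟩
      omega
    · intro hm
      exact ⟨⟨m, by omega⟩, by dsimp only; omega, rfl⟩
  rw [← Finset.card_map, this, Finset.card_union_of_disjoint, Finset.card_range, Nat.card_Ico]
  · omega
  · exact Finset.disjoint_left.2 fun m h1 h2 => by simp only [Finset.mem_range, Finset.mem_Ico] at h1 h2; omega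

lemma finrank_spanPQ (hk : k ≤ n) (ht : t ≤ n - k) (hb : b ≤ k) :
    finrank ℂ (spanPQ n k t b) = t + b := by
  rw [spanPQ_eq_span_basisFun, Set.image_eq_range, finrank_span_eq_card]
  · simpa using card_pqSupport hk ht hb
  · exact (Pi.basisFun ℂ (Fin n)).linearIndependent.comp _ Subtype.val_injective

lemma spanPQ_mono (ht : t ≤ t') (hb : b ≤ b') : spanPQ n k t b ≤ spanPQ n k t' b' := by
  intro x hx
  simp only [mem_spanPQ, pqSupport, Finset.mem_filter, Finset.mem_univ, true_and] at hx ⊢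
  intro j hj
  have := hx j hj
  omega

lemma spanPQ_zero_zero : spanPQ n k 0 0 = ⊥ := by
  rw [eq_bot_iff]
  intro x hx
  simp only [mem_spanPQ, pqSupport, Finset.mem_filter, Finset.mem_univ, true_and] at hx
  exact funext fun j => by_contra fun hj => by have := hx j hj; omega

lemma spanPQ_inf_Pmod : spanPQ n k t b ⊓ Pmod n k = spanPQ n k t 0 := by
  ext x
  simp only [Submodule.mem_inf, Pmod, mem_spanPQ, pqSupport, Finset.mem_filter,
    Finset.mem_univ, true_and]
  refine ⟨fun h j hj => ?_, fun h => ⟨fun j hj => ?_, fun j hj => ?_⟩⟩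
  · have := h.1 j hj; have := h.2 j hj; omega
  all_goals have := h j hj; omega

lemma spanPQ_inf_Qmod : spanPQ n k t b ⊓ Qmod n k = spanPQ n k 0 b := by
  ext x
  simp only [Submodule.mem_inf, Qmod, mem_spanPQ, pqSupport, Finset.mem_filter,
    Finset.mem_univ, true_and]
  refine ⟨fun h j hj => ?_, fun h => ⟨fun j hj => ?_, fun j hj => ?_⟩⟩
  · have := h.1 j hj; have := h.2 j hj; have := j.isLt; omega
  all_goals have := h j hj; have := j.isLt; omega

lemma spanPQ_sup : spanPQ n k t 0 ⊔ spanPQ n k 0 b = spanPQ n k t b := by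
  simp only [spanPQ_eq_span_basisFun, ← Submodule.span_union, ← Set.image_union,
    ← Finset.coe_union]
  congr 3
  ext j
  simp only [pqSupport, Finset.mem_union, Finset.mem_filter, Finset.mem_univ, true_and]
  omega

lemma torusFixed_spanPQ :
    spanPQ n k t b = (spanPQ n k t b ⊓ Pmod n k) ⊔ (spanPQ n k t b ⊓ Qmod n k) := by
  rw [spanPQ_inf_Pmod, spanPQ_inf_Qmod, spanPQ_sup]

end SpanPQ

section Nmap

variable {n k t b t' b' : ℕ}

lemma map_Nmap_spanPQ (ht : t ≤ t' + 1) (hb : b ≤ b' + 1) :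
    (spanPQ n k t b).map (Nmap n k) ≤ spanPQ n k t' b' := by
  rintro _ ⟨x, hx, rfl⟩
  simp only [SetLike.mem_coe, mem_spanPQ, pqSupport, Finset.mem_filter, Finset.mem_univ,
    true_and] at hx ⊢
  intro j hj
  simp only [Nmap, LinearMap.coe_mk, AddHom.coe_mk] at hj
  split_ifs at hj with h
  · have := hx _ hj
    dsimp only at this
    omega
  · exact absurd rfl hj

lemma comap_Nmap_spanPQ : (spanPQ n k t b).comap (Nmap n k) ≤ spanPQ n k (t + 1) (b + 1) := by
  intro x hx
  simp only [Submodule.mem_comap, mem_spanPQ, pqSupport, Finset.mem_filter, Finset.mem_univ,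
    true_and] at hx ⊢
  intro j hj
  by_cases h : 0 < j.val ∧ j.val ≠ n - k
  · have hNx : Nmap n k x ⟨j - 1, by omega⟩ = x j := by
      simp only [Nmap, LinearMap.coe_mk, AddHom.coe_mk]
      rw [dif_pos (by omega)]
      congr 1
      ext
      dsimp only
      omega
    have := hx _ (hNx ▸ hj)
    simp only at this
    omega
  · omega

lemma map_Nmap_pow_spanPQ (d : ℕ) :
    (spanPQ n k (t + d) (b + d)).map (Nmap n k ^ d) ≤ spanPQ n k t b := by
  induction d generalizing t b with
  | zero => rw [add_zero, add_zero, pow_zero, Module.End.one_eq_id, Submodule.map_id]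
  | succ d ih =>
    rw [pow_succ, Module.End.mul_eq_comp, Submodule.map_comp]
    exact (Submodule.map_mono (map_Nmap_spanPQ (by omega) (by omega))).trans ih

lemma isNilpotent_Nmap : IsNilpotent (Nmap n k) := by
  refine ⟨n, LinearMap.range_eq_bot.1 (eq_bot_iff.2 ?_)⟩
  have htop : ⊤ ≤ spanPQ n k (0 + n) (0 + n) := by
    intro x _
    simp only [mem_spanPQ, pqSupport, Finset.mem_filter, Finset.mem_univ, true_and]
    intro j _
    omega
  rw [LinearMap.range_eq_map, ← spanPQ_zero_zero (n := n) (k := k)]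
  exact (Submodule.map_mono htop).trans (map_Nmap_pow_spanPQ n)

lemma ker_Nmap_pow_le (d : ℕ) : LinearMap.ker (Nmap n k ^ d) ≤ spanPQ n k d d := by
  induction d with
  | zero => simp [Module.End.one_eq_id]
  | succ d ih =>
    rw [pow_succ, Module.End.mul_eq_comp, LinearMap.ker_comp]
    exact (Submodule.comap_mono ih).trans comap_Nmap_spanPQ

end Nmap

section Invariant

variable {n k : ℕ} {W : Submodule ℂ (Fin n → ℂ)}

lemma le_spanPQ_finrank_of_map_le (hinv : W.map (Nmap n k) ≤ W) :
    W ≤ spanPQ n k (finrank ℂ W) (finrank ℂ W) :=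
  (Module.End.le_ker_pow_finrank_of_isNilpotent isNilpotent_Nmap hinv).trans (ker_Nmap_pow_le _)

lemma eq_spanPQ_of_le_Pmod (hk : k ≤ n) (hW : W ≤ Pmod n k) (hinv : W.map (Nmap n k) ≤ W) :
    W = spanPQ n k (finrank ℂ W) 0 := by
  have hd : finrank ℂ W ≤ n - k := by
    have h := Submodule.finrank_mono hW
    rwa [Pmod, finrank_spanPQ hk le_rfl (Nat.zero_le _), add_zero] at h
  refine Submodule.eq_of_le_of_finrank_eq ?_ ?_
  · rw [← spanPQ_inf_Pmod (b := finrank ℂ W)]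
    exact le_inf (le_spanPQ_finrank_of_map_le hinv) hW
  · rw [finrank_spanPQ hk hd (Nat.zero_le _), add_zero]

lemma eq_spanPQ_of_le_Qmod (hk : k ≤ n) (hW : W ≤ Qmod n k) (hinv : W.map (Nmap n k) ≤ W) :
    W = spanPQ n k 0 (finrank ℂ W) := by
  have hd : finrank ℂ W ≤ k := by
    have h := Submodule.finrank_mono hW
    rwa [Qmod, finrank_spanPQ hk (Nat.zero_le _) le_rfl, zero_add] at h
  refine Submodule.eq_of_le_of_finrank_eq ?_ ?_
  · rw [← spanPQ_inf_Qmod (t := finrank ℂ W)]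
    exact le_inf (le_spanPQ_finrank_of_map_le hinv) hW
  · rw [finrank_spanPQ hk (Nat.zero_le _) hd, zero_add]

lemma eq_spanPQ_of_torusFixed (hk : k ≤ n) (hW : W = (W ⊓ Pmod n k) ⊔ (W ⊓ Qmod n k))
    (hinv : W.map (Nmap n k) ≤ W) :
    W = spanPQ n k (finrank ℂ ↥(W ⊓ Pmod n k)) (finrank ℂ ↥(W ⊓ Qmod n k)) := by
  have hP : (W ⊓ Pmod n k).map (Nmap n k) ≤ W ⊓ Pmod n k :=
    (Submodule.map_inf_le _).trans (inf_le_inf hinv (map_Nmap_spanPQ (by omega) (by omega)))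
  have hQ : (W ⊓ Qmod n k).map (Nmap n k) ≤ W ⊓ Qmod n k :=
    (Submodule.map_inf_le _).trans (inf_le_inf hinv (map_Nmap_spanPQ (by omega) (by omega)))
  rw [← spanPQ_sup, ← eq_spanPQ_of_le_Pmod hk inf_le_right hP,
    ← eq_spanPQ_of_le_Qmod hk inf_le_right hQ]
  exact hW

end Invariant

section Counts

variable {n k : ℕ} {w : Fin n → Bool}

@[simp]
lemma bcount_zero : bcount n w 0 = 0 := by
  simp [bcount]

lemma bcount_succ (j : Fin n) : bcount n w (j + 1) = bcount n w j + if w j then 1 else 0 := by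
  have hsplit : (Finset.univ.filter fun i : Fin n => i.val < j + 1 ∧ w i = true) =
      (Finset.univ.filter fun i : Fin n => i.val < j ∧ w i = true) ∪
        ({j} : Finset (Fin n)).filter fun i => w i = true := by
    ext i
    simp only [Finset.mem_union, Finset.mem_filter, Finset.mem_univ, true_and,
      Finset.mem_singleton, Fin.ext_iff, Nat.lt_add_one_iff_lt_or_eq, or_and_right]
  rw [bcount, bcount, hsplit, Finset.card_union_of_disjoint, Finset.filter_singleton]
  · split_ifs <;> simp_all
  · refine Finset.disjoint_left.2 fun i h1 h2 => ?_
    simp only [Finset.mem_filter, Finset.mem_singleton] at h1 h2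
    rw [h2.1] at h1
    exact lt_irrefl _ h1.2.1

lemma tcount_add_bcount {i : ℕ} (hi : i ≤ n) : tcount n w i + bcount n w i = i := by
  rw [tcount, bcount, ← Finset.card_union_of_disjoint, ← Finset.filter_or]
  · convert Fin.card_filter_val_lt (n := n) (m := i) using 2
    · ext j
      cases hw : w j <;> simp [hw]
    · omega
  · exact Finset.disjoint_filter.2 fun j _ h1 h2 => by rw [h1.2] at h2; simp at h2

lemma tcount_mono {i i' : ℕ} (h : i ≤ i') : tcount n w i ≤ tcount n w i' :=
  Finset.card_le_card <|
    Finset.monotone_filter_right _ fun _ _ => And.imp_left fun hj => hj.trans_le h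

lemma bcount_mono {i i' : ℕ} (h : i ≤ i') : bcount n w i ≤ bcount n w i' :=
  Finset.card_le_card <|
    Finset.monotone_filter_right _ fun _ _ => And.imp_left fun hj => hj.trans_le h

lemma isWeightSeq_iff_bcount : IsWeightSeq n k w ↔ bcount n w n = k := by
  simp [IsWeightSeq, bcount]

lemma bcount_eq_of_steps {β : Fin (n + 1) → ℕ} (h0 : β 0 = 0)
    (hstep : ∀ j : Fin n, β j.succ = β j.castSucc ∨ β j.succ = β j.castSucc + 1)
    (i : Fin (n + 1)) : bcount n (fun j => decide (β j.castSucc < β j.succ)) i = β i := by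
  induction i using Fin.induction with
  | zero => simp [h0]
  | succ j ih =>
    rw [Fin.val_succ, bcount_succ, ← Fin.val_castSucc, ih]
    rcases hstep j with h | h <;> simp [h]

end Counts

lemma card_isWeightSeq (n k : ℕ) :
    Nat.card {w : Fin n → Bool // IsWeightSeq n k w} = n.choose k := by
  classical
  have hchoose : (Finset.powersetCard k (Finset.univ : Finset (Fin n))).card = n.choose k := by
    simp
  rw [Nat.card_eq_fintype_card, Fintype.card_subtype, ← hchoose]
  refine Finset.card_nbij' (fun w => Finset.univ.filter (w · = true)) (fun s j => decide (j ∈ s))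
    ?_ ?_ ?_ ?_
  · intro w hw
    simp only [Finset.mem_coe, Finset.mem_filter, Finset.mem_univ, true_and] at hw
    simpa [IsWeightSeq] using hw
  · intro s hs
    simp only [Finset.coe_filter, Finset.mem_univ, true_and, Set.mem_ofPred_eq]
    simpa [IsWeightSeq] using hs
  · intro w _
    funext j
    simp
  · intro s _
    ext j
    simp

section Flags

variable {n k : ℕ}

lemma isNFlag_phiFlag (hk : k ≤ n) {w : Fin n → Bool} (hw : IsWeightSeq n k w) :
    IsNFlag n k (PhiFlag n k w) := by
  rw [isWeightSeq_iff_bcount] at hw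
  have htn : tcount n w n = n - k := by have := tcount_add_bcount (w := w) le_rfl; omega
  refine ⟨fun i i' h => spanPQ_mono (tcount_mono h) (bcount_mono h), fun i => ?_, fun j => ?_⟩
  · have hi := i.is_le
    rw [PhiFlag, finrank_spanPQ hk (htn ▸ tcount_mono hi) (hw ▸ bcount_mono hi),
      tcount_add_bcount hi]
  · have h1 := tcount_add_bcount (w := w) (i := j + 1) j.isLt
    have h2 := tcount_add_bcount (w := w) j.isLt.le
    have h3 := bcount_mono (w := w) (Nat.le_add_right j 1)
    have h4 := tcount_mono (w := w) (Nat.le_add_right j 1)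
    simp only [PhiFlag, Fin.val_succ, Fin.val_castSucc]
    exact map_Nmap_spanPQ (by omega) (by omega)

lemma torusFixed_phiFlag (w : Fin n → Bool) : TorusFixed n k (PhiFlag n k w) :=
  fun _ => torusFixed_spanPQ

/-- The inverse of `Φ`: position `j` gets `∨` exactly when `F (j+1) ∩ Q` is larger than
`F j ∩ Q`. -/
noncomputable def weightOf (n k : ℕ) (F : Fin (n + 1) → Submodule ℂ (Fin n → ℂ)) :
    Fin n → Bool :=
  fun j =>
    decide (finrank ℂ ↥(F j.castSucc ⊓ Qmod n k) < finrank ℂ ↥(F j.succ ⊓ Qmod n k))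

lemma finrank_phiFlag_inf_Qmod (hk : k ≤ n) {w : Fin n → Bool} (hw : IsWeightSeq n k w)
    (i : Fin (n + 1)) : finrank ℂ ↥(PhiFlag n k w i ⊓ Qmod n k) = bcount n w i := by
  rw [isWeightSeq_iff_bcount] at hw
  rw [PhiFlag, spanPQ_inf_Qmod, finrank_spanPQ hk (Nat.zero_le _) (hw ▸ bcount_mono i.is_le),
    zero_add]

lemma weightOf_phiFlag (hk : k ≤ n) {w : Fin n → Bool} (hw : IsWeightSeq n k w) :
    weightOf n k (PhiFlag n k w) = w := by
  funext j
  simp only [weightOf, finrank_phiFlag_inf_Qmod hk hw, Fin.val_succ, Fin.val_castSucc,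
    bcount_succ]
  cases w j <;> simp

variable {F : Fin (n + 1) → Submodule ℂ (Fin n → ℂ)}

lemma IsNFlag.map_Nmap_le (hF : IsNFlag n k F) (i : Fin (n + 1)) :
    (F i).map (Nmap n k) ≤ F i := by
  induction i using Fin.cases with
  | zero =>
    rw [Submodule.finrank_eq_zero.1 (hF.2.1 0), Submodule.map_bot]
  | succ j => exact (hF.2.2 j).trans (hF.1 (Fin.castSucc_le_succ j))

lemma finrank_inf_Pmod_add_finrank_inf_Qmod (hF : IsNFlag n k F) (hT : TorusFixed n k F)
    (i : Fin (n + 1)) :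
    finrank ℂ ↥(F i ⊓ Pmod n k) + finrank ℂ ↥(F i ⊓ Qmod n k) = i := by
  have hdisj : (F i ⊓ Pmod n k) ⊓ (F i ⊓ Qmod n k) = ⊥ := by
    refine eq_bot_iff.2 ((inf_le_inf inf_le_right inf_le_right).trans ?_)
    rw [Pmod, spanPQ_inf_Qmod, spanPQ_zero_zero]
  have h := Submodule.finrank_sup_add_finrank_inf_eq (F i ⊓ Pmod n k) (F i ⊓ Qmod n k)
  rw [hdisj, finrank_bot, add_zero, ← hT i, hF.2.1 i] at h
  exact h.symm

lemma bcount_weightOf (hF : IsNFlag n k F) (hT : TorusFixed n k F) (i : Fin (n + 1)) :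
    bcount n (weightOf n k F) i = finrank ℂ ↥(F i ⊓ Qmod n k) := by
  refine bcount_eq_of_steps (β := fun i => finrank ℂ ↥(F i ⊓ Qmod n k)) ?_ (fun j => ?_) i
  · have := finrank_inf_Pmod_add_finrank_inf_Qmod hF hT 0
    simp only [Fin.val_zero] at this
    omega
  · have hle := hF.1 (Fin.castSucc_le_succ j)
    have hP := Submodule.finrank_mono (inf_le_inf_right (Pmod n k) hle)
    have hQ := Submodule.finrank_mono (inf_le_inf_right (Qmod n k) hle)
    have h1 := finrank_inf_Pmod_add_finrank_inf_Qmod hF hT j.succ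
    have h2 := finrank_inf_Pmod_add_finrank_inf_Qmod hF hT j.castSucc
    simp only [Fin.val_succ, Fin.val_castSucc] at h1 h2
    omega

lemma phiFlag_weightOf (hk : k ≤ n) (hF : IsNFlag n k F) (hT : TorusFixed n k F) :
    PhiFlag n k (weightOf n k F) = F := by
  funext i
  have hsum := finrank_inf_Pmod_add_finrank_inf_Qmod hF hT i
  have hb := bcount_weightOf hF hT i
  have ht := tcount_add_bcount (w := weightOf n k F) i.is_le
  conv_rhs => rw [eq_spanPQ_of_torusFixed hk (hT i) (hF.map_Nmap_le i)]
  rw [PhiFlag]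
  congr 1; omega

lemma isWeightSeq_weightOf (hk : k ≤ n) (hF : IsNFlag n k F) (hT : TorusFixed n k F) :
    IsWeightSeq n k (weightOf n k F) := by
  have htop : F (Fin.last n) = ⊤ :=
    Submodule.eq_top_of_finrank_eq (by rw [hF.2.1, Fin.val_last, Module.finrank_fin_fun])
  have h := bcount_weightOf hF hT (Fin.last n)
  rw [htop, top_inf_eq, Qmod, finrank_spanPQ hk (Nat.zero_le _) le_rfl, zero_add,
    Fin.val_last] at h
  exact isWeightSeq_iff_bcount.2 h

end Flags

theorem Phi_bijection_general (n k : ℕ) (hkn : 2 * k ≤ n) :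
    Set.BijOn (PhiFlag n k) {w | IsWeightSeq n k w}
      {F | IsNFlag n k F ∧ TorusFixed n k F} ∧
    Nat.card {F : Fin (n + 1) → Submodule ℂ (Fin n → ℂ) //
        IsNFlag n k F ∧ TorusFixed n k F} = Nat.choose n k := by
  have hk : k ≤ n := by omega
  have hbij : Set.BijOn (PhiFlag n k) {w | IsWeightSeq n k w}
      {F | IsNFlag n k F ∧ TorusFixed n k F} :=
    Set.InvOn.bijOn (f' := weightOf n k)
      ⟨fun w hw => weightOf_phiFlag hk hw, fun F hF => phiFlag_weightOf hk hF.1 hF.2⟩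
      (fun w hw => ⟨isNFlag_phiFlag hk hw, torusFixed_phiFlag w⟩)
      (fun F hF => isWeightSeq_weightOf hk hF.1 hF.2)
  refine ⟨hbij, ?_⟩
  rw [← card_isWeightSeq n k]
  exact (Nat.card_congr hbij.equiv).symm

/-- `Φ` is a bijection from weight sequences of shape `(n-k, k)` onto
torus-fixed complete `N`-invariant flags; in particular the Springer fiber contains
exactly `n.choose k` torus-fixed flags. -/
theorem Phi_bijection (n k : ℕ) (hn : 1 ≤ n) (hkn : 2 * k ≤ n) :
    Set.BijOn (PhiFlag n k) {w | IsWeightSeq n k w}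
      {F | IsNFlag n k F ∧ TorusFixed n k F} ∧
    Nat.card {F : Fin (n + 1) → Submodule ℂ (Fin n → ℂ) //
        IsNFlag n k F ∧ TorusFixed n k F} = Nat.choose n k :=
  Phi_bijection_general n k hkn

end Springer
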